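/- Let n ≥ 3. Let β(t) = z(t)·(0, 1, r(t)) ∈ ℂ³ (with z : I → ℂ∖{0} and r : I → ℝ twice differentiable on an open interval I) satisfy condition Geo₃, and suppose β is not a straight line, i.e., there do not exist P, Q ∈ ℂ³ with β(t) = P + tQ for all t ∈ I. Let a₃, …, a_n ∈ ℝ and for each j ∈ {3,…,n} let s_j : I → ℝ be either the constant function 1 or the function r; set A₁ = {j : s_j is the constant 1} and A₂ = {j : s_j = r}. Then the curve γ(t) = z(t)·(0, 1, a₃s₃(t), …, a_n s_n(t)) ∈ ℂ^n satisfies condition Geo_n if and only if 1 + Σ_{j∈A₁} a_j² = Σ_{j∈A₂} a_j². -/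

import Mathlib

open Complex

noncomputable section

/-- The standard real inner product `⟪Z, W⟫ = Σ_j Re(Z_j · conj(W_j))` on `ℂ^n ≅ ℝ^{2n}`. -/
def rinner {n : ℕ} (Z W : Fin n → ℂ) : ℝ :=
  ∑ j, (Z j * (starRingEnd ℂ) (W j)).re

/-- Condition `Geo_n` for a curve `γ(t) = z(t)·(0, 1, r₃(t), …, r_n(t))` with first and second
derivatives `γ'`, `γ''` on an open interval `I`: constant speed, plus `γ''(t) ⟂ i·γ(t)` and
`γ''(t) ⟂ z(t)·e_j` for all `j = 2, …, n`. -/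
def Geo {n : ℕ} (I : Set ℝ) (z : ℝ → ℂ) (γ γ' γ'' : ℝ → Fin n → ℂ) : Prop :=
  (∃ c : ℝ, ∀ t ∈ I, rinner (γ' t) (γ' t) = c) ∧
  (∀ t ∈ I, rinner (γ'' t) (fun j => Complex.I * γ t j) = 0) ∧
  (∀ t ∈ I, ∀ j : Fin n, (j : ℕ) ≠ 0 →
    rinner (γ'' t) (fun k => if k = j then z t else 0) = 0)

lemma rinner_indicator {n : ℕ} (Z : Fin n → ℂ) (j : Fin n) (w : ℂ) :
    rinner Z (fun k => if k = j then w else 0) = (Z j * (starRingEnd ℂ) w).re := by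
  unfold rinner
  rw [Finset.sum_eq_single j]
  · simp
  · intro b _ hb; simp [hb]
  · simp

lemma constOn {E : Type*} [NormedAddCommGroup E] [NormedSpace ℝ E]
    {I : Set ℝ} (hconv : Convex ℝ I) {f f' : ℝ → E}
    (hd : ∀ t ∈ I, HasDerivAt f (f' t) t) (h0 : ∀ t ∈ I, f' t = 0) :
    ∀ s ∈ I, ∀ t ∈ I, f s = f t := by
  intro s hs t ht
  have h := Convex.norm_image_sub_le_of_norm_hasDerivWithin_le
      (fun x hx => (hd x hx).hasDerivWithinAt) (C := 0)
      (fun x hx => by simp [h0 x hx]) hconv ht hs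
  have h2 : ‖f s - f t‖ ≤ 0 := by simpa using h
  have h3 : f s - f t = 0 := by simpa using le_antisymm h2 (norm_nonneg _)
  exact sub_eq_zero.mp h3

lemma re_conj_I_mul (w u : ℂ) :
    (w * (starRingEnd ℂ) (Complex.I * u)).re = (w * (starRingEnd ℂ) u).im := by
  simp [map_mul, Complex.conj_I, Complex.mul_re, Complex.mul_im]
  ring

lemma sq_mul_conj (aa : ℝ) (w w' : ℂ) :
    ((aa:ℂ) * w * (starRingEnd ℂ) ((aa:ℂ) * w')).re = aa^2 * (w * (starRingEnd ℂ) w').re := by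
  have h : (aa:ℂ) * w * (starRingEnd ℂ) ((aa:ℂ) * w')
      = ((aa^2 : ℝ):ℂ) * (w * (starRingEnd ℂ) w') := by
    rw [map_mul, Complex.conj_ofReal]; push_cast; ring
  rw [h, Complex.re_ofReal_mul]

lemma sq_mul_conj_I (aa : ℝ) (w u : ℂ) :
    ((aa:ℂ) * w * (starRingEnd ℂ) (Complex.I * ((aa:ℂ) * u))).re
      = aa^2 * (w * (starRingEnd ℂ) (Complex.I * u)).re := by
  have h : (aa:ℂ) * w * (starRingEnd ℂ) (Complex.I * ((aa:ℂ) * u))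
      = ((aa^2 : ℝ):ℂ) * (w * (starRingEnd ℂ) (Complex.I * u)) := by
    simp only [map_mul, Complex.conj_ofReal]; push_cast; ring
  rw [h, Complex.re_ofReal_mul]

/-- Let `β(t) = z(t)·(0,1,r(t))` satisfy `Geo₃` on an open interval `I` and
not be a straight line.  For `a₃, …, a_n ∈ ℝ` and choices `s_j ∈ {1, r}` (encoded by
`c j : Bool`, with `A₁ = {j : s_j ≡ 1}`, `A₂ = {j : s_j ≡ r}`), the curve
`γ(t) = z(t)·(0, 1, a₃s₃(t), …, a_n s_n(t))` satisfies `Geo_n` if and only if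
`1 + Σ_{j ∈ A₁} a_j² = Σ_{j ∈ A₂} a_j²`.  (Here `n = m + 3 ≥ 3`.) -/
theorem geodesic_extension_iff (m : ℕ) (I : Set ℝ)
    (hIopen : IsOpen I) (hIconv : Convex ℝ I) (hIne : I.Nonempty)
    (z z' z'' : ℝ → ℂ) (r r' r'' : ℝ → ℝ)
    (hz0 : ∀ t ∈ I, z t ≠ 0)
    (hz1 : ∀ t ∈ I, HasDerivAt z (z' t) t)
    (hz2 : ∀ t ∈ I, HasDerivAt z' (z'' t) t)
    (hr1 : ∀ t ∈ I, HasDerivAt r (r' t) t)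
    (hr2 : ∀ t ∈ I, HasDerivAt r' (r'' t) t)
    -- the curve β(t) = z(t)·(0, 1, r(t)) in ℂ³ and its derivatives
    (β β' β'' : ℝ → Fin 3 → ℂ)
    (hβ : ∀ t ∈ I, β t = fun j => z t * (![(0 : ℂ), 1, ((r t : ℝ) : ℂ)] j))
    (hβ1 : ∀ t ∈ I, HasDerivAt β (β' t) t)
    (hβ2 : ∀ t ∈ I, HasDerivAt β' (β'' t) t)
    (hGeo3 : Geo I z β β' β'')
    -- β is not a straight line
    (hline : ¬ ∃ P Q : Fin 3 → ℂ, ∀ t ∈ I, β t = fun j => P j + (t : ℂ) * Q j)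
    -- coefficients and the choices s_j ≡ 1 (c j = true) or s_j ≡ r (c j = false)
    (a : Fin (m + 1) → ℝ) (c : Fin (m + 1) → Bool)
    (s : Fin (m + 1) → ℝ → ℝ)
    (hs : ∀ j, s j = if c j then (fun _ => (1 : ℝ)) else r)
    -- the curve γ(t) = z(t)·(0, 1, a₃s₃(t), …, a_n s_n(t)) in ℂ^n and its derivatives
    (γ γ' γ'' : ℝ → Fin (m + 3) → ℂ)
    (hγ : ∀ t ∈ I, γ t = fun j =>
      z t * ((Fin.cons (0 : ℂ) (Fin.cons (1 : ℂ)
        (fun i : Fin (m + 1) => ((a i * s i t : ℝ) : ℂ))) : Fin (m + 3) → ℂ) j))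
    (hγ1 : ∀ t ∈ I, HasDerivAt γ (γ' t) t)
    (hγ2 : ∀ t ∈ I, HasDerivAt γ' (γ'' t) t) :
    Geo I z γ γ' γ'' ↔
      1 + ∑ j ∈ Finset.univ.filter (fun j => c j = true), (a j) ^ 2
        = ∑ j ∈ Finset.univ.filter (fun j => c j = false), (a j) ^ 2 := by
  classical
  obtain ⟨t₀, ht₀⟩ := hIne
  set v : ℝ → ℂ := fun t => z t * ((r t : ℝ) : ℂ) with hvdef
  set v1 : ℝ → ℂ := fun t => z' t * ((r t : ℝ) : ℂ) + z t * ((r' t : ℝ) : ℂ) with hv1def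
  set v2 : ℝ → ℂ := fun t =>
    z'' t * ((r t : ℝ) : ℂ) + 2 * z' t * ((r' t : ℝ) : ℂ) + z t * ((r'' t : ℝ) : ℂ) with hv2def
  have hvd : ∀ t ∈ I, HasDerivAt v (v1 t) t := by
    intro t ht
    exact (hz1 t ht).mul ((hr1 t ht).ofReal_comp)
  have hv1d : ∀ t ∈ I, HasDerivAt v1 (v2 t) t := by
    intro t ht
    have h := ((hz2 t ht).mul ((hr1 t ht).ofReal_comp)).add
      ((hz1 t ht).mul ((hr2 t ht).ofReal_comp))
    have he : z'' t * ((r t : ℝ) : ℂ) + z' t * ((r' t : ℝ) : ℂ)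
        + (z' t * ((r' t : ℝ) : ℂ) + z t * ((r'' t : ℝ) : ℂ)) = v2 t := by
      simp only [hv2def]; ring
    rw [he] at h
    exact h
  -- explicit forms of β and its derivatives
  set bf : ℝ → Fin 3 → ℂ := fun t => ![0, z t, v t] with hbf
  set bf1 : ℝ → Fin 3 → ℂ := fun t => ![0, z' t, v1 t] with hbf1
  set bf2 : ℝ → Fin 3 → ℂ := fun t => ![0, z'' t, v2 t] with hbf2
  have hβeq : ∀ t ∈ I, β t = bf t := by
    intro t ht
    rw [hβ t ht]
    funext j
    fin_cases j <;> simp [hbf, hvdef]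
  have hbfd : ∀ t ∈ I, HasDerivAt bf (bf1 t) t := by
    intro t ht
    rw [hasDerivAt_pi]
    intro j
    fin_cases j
    · simpa [hbf, hbf1] using hasDerivAt_const t (0 : ℂ)
    · simpa [hbf, hbf1] using hz1 t ht
    · simpa [hbf, hbf1] using hvd t ht
  have hβ'eq : ∀ t ∈ I, β' t = bf1 t := by
    intro t ht
    have hev : β =ᶠ[nhds t] bf := by
      filter_upwards [hIopen.mem_nhds ht] with x hx using hβeq x hx
    exact (hβ1 t ht).unique ((hbfd t ht).congr_of_eventuallyEq hev)
  have hbf1d : ∀ t ∈ I, HasDerivAt bf1 (bf2 t) t := by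
    intro t ht
    rw [hasDerivAt_pi]
    intro j
    fin_cases j
    · simpa [hbf1, hbf2] using hasDerivAt_const t (0 : ℂ)
    · simpa [hbf1, hbf2] using hz2 t ht
    · simpa [hbf1, hbf2] using hv1d t ht
  have hβ''eq : ∀ t ∈ I, β'' t = bf2 t := by
    intro t ht
    have hev : β' =ᶠ[nhds t] bf1 := by
      filter_upwards [hIopen.mem_nhds ht] with x hx using hβ'eq x hx
    exact (hβ2 t ht).unique ((hbf1d t ht).congr_of_eventuallyEq hev)
  -- explicit forms of γ and its derivatives
  set gf : ℝ → Fin (m+3) → ℂ := fun t => Fin.cons 0 (Fin.cons (z t)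
    (fun i => if c i then (a i : ℂ) * z t else (a i : ℂ) * v t)) with hgf
  set gf1 : ℝ → Fin (m+3) → ℂ := fun t => Fin.cons 0 (Fin.cons (z' t)
    (fun i => if c i then (a i : ℂ) * z' t else (a i : ℂ) * v1 t)) with hgf1
  set gf2 : ℝ → Fin (m+3) → ℂ := fun t => Fin.cons 0 (Fin.cons (z'' t)
    (fun i => if c i then (a i : ℂ) * z'' t else (a i : ℂ) * v2 t)) with hgf2
  have hγeq : ∀ t ∈ I, γ t = gf t := by
    intro t ht
    rw [hγ t ht]
    funext j
    refine Fin.cases ?_ (fun i => ?_) j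
    · simp [hgf]
    · refine Fin.cases ?_ (fun k => ?_) i
      · simp [hgf]
      · simp only [hgf, Fin.cons_succ]
        rw [hs k]
        by_cases hc : c k
        · simp [hc, mul_comm]
        · simp only [hc, if_neg, Bool.false_eq_true, ite_false, hvdef]
          push_cast
          ring
  have hgfd : ∀ t ∈ I, HasDerivAt gf (gf1 t) t := by
    intro t ht
    rw [hasDerivAt_pi]
    intro j
    refine Fin.cases ?_ (fun i => ?_) j
    · simpa [hgf, hgf1] using hasDerivAt_const t (0 : ℂ)
    · refine Fin.cases ?_ (fun k => ?_) i
      · simpa [hgf, hgf1] using hz1 t ht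
      · simp only [hgf, hgf1, Fin.cons_succ]
        by_cases hc : c k
        · simpa [hc] using (hz1 t ht).const_mul ((a k : ℂ))
        · simpa [hc] using (hvd t ht).const_mul ((a k : ℂ))
  have hγ'eq : ∀ t ∈ I, γ' t = gf1 t := by
    intro t ht
    have hev : γ =ᶠ[nhds t] gf := by
      filter_upwards [hIopen.mem_nhds ht] with x hx using hγeq x hx
    exact (hγ1 t ht).unique ((hgfd t ht).congr_of_eventuallyEq hev)
  have hgf1d : ∀ t ∈ I, HasDerivAt gf1 (gf2 t) t := by
    intro t ht
    rw [hasDerivAt_pi]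
    intro j
    refine Fin.cases ?_ (fun i => ?_) j
    · simpa [hgf1, hgf2] using hasDerivAt_const t (0 : ℂ)
    · refine Fin.cases ?_ (fun k => ?_) i
      · simpa [hgf1, hgf2] using hz2 t ht
      · simp only [hgf1, hgf2, Fin.cons_succ]
        by_cases hc : c k
        · simpa [hc] using (hz2 t ht).const_mul ((a k : ℂ))
        · simpa [hc] using (hv1d t ht).const_mul ((a k : ℂ))
  have hγ''eq : ∀ t ∈ I, γ'' t = gf2 t := by
    intro t ht
    have hev : γ' =ᶠ[nhds t] gf1 := by
      filter_upwards [hIopen.mem_nhds ht] with x hx using hγ'eq x hx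
    exact (hγ2 t ht).unique ((hgf1d t ht).congr_of_eventuallyEq hev)
  -- scalar quantities
  set p : ℝ → ℝ := fun t => (z' t * (starRingEnd ℂ) (z' t)).re with hp
  set q : ℝ → ℝ := fun t => (v1 t * (starRingEnd ℂ) (v1 t)).re with hq
  set X : ℝ → ℝ := fun t => (z'' t * (starRingEnd ℂ) (Complex.I * z t)).re with hX
  set Y : ℝ → ℝ := fun t => (v2 t * (starRingEnd ℂ) (Complex.I * v t)).re with hY
  set Pf : ℝ → ℝ := fun t => (z'' t * (starRingEnd ℂ) (z t)).re with hPfdef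
  set Qf : ℝ → ℝ := fun t => (v2 t * (starRingEnd ℂ) (z t)).re with hQfdef
  obtain ⟨⟨c₀, hc₀⟩, hO3, hE3⟩ := hGeo3
  have hpq : ∀ t ∈ I, p t + q t = c₀ := by
    intro t ht
    have h := hc₀ t ht
    rw [hβ'eq t ht] at h
    simp only [rinner, hbf1, Fin.sum_univ_three, Matrix.cons_val_zero, Matrix.cons_val_one,
      Matrix.head_cons, Matrix.cons_val_two, Matrix.tail_cons, zero_mul, Complex.zero_re,
      zero_add] at h
    rw [hp, hq]
    exact h
  have hXY : ∀ t ∈ I, X t + Y t = 0 := by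
    intro t ht
    have h := hO3 t ht
    rw [hβ''eq t ht] at h
    simp only [rinner, Fin.sum_univ_three] at h
    rw [hβeq t ht] at h
    simp only [hbf, hbf2, Matrix.cons_val_zero, Matrix.cons_val_one, Matrix.head_cons,
      Matrix.cons_val_two, Matrix.tail_cons, mul_zero, zero_mul, Complex.zero_re,
      zero_add] at h
    rw [hX, hY]
    exact h
  have hPf : ∀ t ∈ I, Pf t = 0 := by
    intro t ht
    have h := hE3 t ht 1 (by decide)
    rw [hβ''eq t ht, rinner_indicator] at h
    simpa [hbf2, hPfdef] using h
  have hQf : ∀ t ∈ I, Qf t = 0 := by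
    intro t ht
    have h := hE3 t ht 2 (by decide)
    rw [hβ''eq t ht, rinner_indicator] at h
    simpa [hbf2, hQfdef] using h
  -- sums over the coefficients
  set K := ∑ j ∈ Finset.univ.filter (fun j => c j = true), (a j) ^ 2 with hK
  set L := ∑ j ∈ Finset.univ.filter (fun j => c j = false), (a j) ^ 2 with hL
  have hsplit : ∀ pp qq : ℝ,
      (∑ i, (if c i then (a i)^2 * pp else (a i)^2 * qq)) = K * pp + L * qq := by
    intro pp qq
    rw [hK, hL, Finset.sum_mul, Finset.sum_mul, Finset.sum_filter, Finset.sum_filter,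
      ← Finset.sum_add_distrib]
    refine Finset.sum_congr rfl fun i _ => ?_
    by_cases hc : c i <;> simp [hc]
  -- the three rinner quantities for γ
  have hg1 : ∀ t ∈ I, rinner (γ' t) (γ' t) = (1 + K) * p t + L * q t := by
    intro t ht
    rw [hγ'eq t ht]
    simp only [rinner, hgf1, Fin.sum_univ_succ, Fin.cons_zero, Fin.cons_succ, zero_mul,
      Complex.zero_re, zero_add]
    rw [← Fin.sum_univ_succ
      (f := fun i : Fin (m+1) => ((if c i then (a i : ℂ) * z' t else (a i : ℂ) * v1 t) *
        (starRingEnd ℂ) (if c i then (a i : ℂ) * z' t else (a i : ℂ) * v1 t)).re)]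
    have hterm : ∀ i : Fin (m+1),
        ((if c i then (a i : ℂ) * z' t else (a i : ℂ) * v1 t) *
          (starRingEnd ℂ) (if c i then (a i : ℂ) * z' t else (a i : ℂ) * v1 t)).re
          = if c i then (a i)^2 * p t else (a i)^2 * q t := by
      intro i
      by_cases hc : c i
      · simp only [hc, if_true, sq_mul_conj, hp]
      · simp only [hc, Bool.false_eq_true, if_false, sq_mul_conj, hq]
    rw [Finset.sum_congr rfl (fun i _ => hterm i), hsplit]
    simp only [hp]
    ring
  have hg2 : ∀ t ∈ I, rinner (γ'' t) (fun j => Complex.I * γ t j)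
      = (1 + K) * X t + L * Y t := by
    intro t ht
    rw [hγ''eq t ht, hγeq t ht]
    simp only [rinner, hgf, hgf2, Fin.sum_univ_succ, Fin.cons_zero, Fin.cons_succ, zero_mul,
      mul_zero, Complex.zero_re, zero_add, map_zero]
    rw [← Fin.sum_univ_succ
      (f := fun i : Fin (m+1) => ((if c i then (a i : ℂ) * z'' t else (a i : ℂ) * v2 t) *
        (starRingEnd ℂ) (Complex.I * (if c i then (a i : ℂ) * z t else (a i : ℂ) * v t))).re)]
    have hterm : ∀ i : Fin (m+1),
        ((if c i then (a i : ℂ) * z'' t else (a i : ℂ) * v2 t) *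
          (starRingEnd ℂ) (Complex.I * (if c i then (a i : ℂ) * z t else (a i : ℂ) * v t))).re
          = if c i then (a i)^2 * X t else (a i)^2 * Y t := by
      intro i
      by_cases hc : c i
      · simp only [hc, if_true, sq_mul_conj_I, hX]
      · simp only [hc, Bool.false_eq_true, if_false, sq_mul_conj_I, hY]
    rw [Finset.sum_congr rfl (fun i _ => hterm i), hsplit]
    simp only [hX]
    ring
  have hg3 : ∀ t ∈ I, ∀ j : Fin (m+3), (j : ℕ) ≠ 0 →
      rinner (γ'' t) (fun k => if k = j then z t else 0) = 0 := by
    intro t ht j hj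
    rw [hγ''eq t ht, rinner_indicator]
    have hj' : j ≠ 0 := by
      intro h; rw [h] at hj; exact hj rfl
    obtain ⟨i, rfl⟩ := Fin.eq_succ_of_ne_zero hj'
    refine Fin.cases ?_ (fun k => ?_) i
    · simp only [hgf2, Fin.cons_succ, Fin.cons_zero]
      exact hPf t ht
    · simp only [hgf2, Fin.cons_succ]
      by_cases hc : c k
      · simp only [hc, if_true]
        rw [mul_assoc, Complex.re_ofReal_mul]
        rw [show (z'' t * (starRingEnd ℂ) (z t)).re = Pf t from rfl, hPf t ht, mul_zero]
      · simp only [hc, Bool.false_eq_true, if_false]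
        rw [mul_assoc, Complex.re_ofReal_mul]
        rw [show (v2 t * (starRingEnd ℂ) (z t)).re = Qf t from rfl, hQf t ht, mul_zero]
  constructor
  · -- forward direction
    intro hG
    by_contra hne
    obtain ⟨-, hO, -⟩ := hG
    have hsub : 1 + K - L ≠ 0 := sub_ne_zero_of_ne hne
    have hX0 : ∀ t ∈ I, X t = 0 := by
      intro t ht
      have h := hO t ht
      rw [hg2 t ht] at h
      have h2 := hXY t ht
      have hYt : Y t = -X t := by linarith
      rw [hYt] at h
      have h3 : (1 + K - L) * X t = 0 := by linear_combination h
      exact (mul_eq_zero.mp h3).resolve_left hsub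
    have hY0 : ∀ t ∈ I, Y t = 0 := by
      intro t ht
      have := hXY t ht; have := hX0 t ht; linarith
    have hz''0 : ∀ t ∈ I, z'' t = 0 := by
      intro t ht
      have h1 : (z'' t * (starRingEnd ℂ) (z t)).re = 0 := hPf t ht
      have h2 : (z'' t * (starRingEnd ℂ) (z t)).im = 0 := by
        have h := hX0 t ht
        simp only [hX] at h
        rwa [re_conj_I_mul] at h
      have h3 : z'' t * (starRingEnd ℂ) (z t) = 0 := by
        apply Complex.ext <;> simp [h1, h2]
      have h4 : (starRingEnd ℂ) (z t) ≠ 0 := by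
        simpa using hz0 t ht
      exact (mul_eq_zero.mp h3).resolve_right h4
    -- z' is constant
    have hz'const : ∀ s ∈ I, ∀ t ∈ I, z' s = z' t := constOn hIconv hz2 hz''0
    -- μ = Im(z'·conj z) is constant
    set μ : ℝ → ℝ := fun t => (z' t * (starRingEnd ℂ) (z t)).im with hμdef
    have hμd : ∀ t ∈ I, HasDerivAt μ 0 t := by
      intro t ht
      have hconj : HasDerivAt (fun x => (starRingEnd ℂ) (z x)) ((starRingEnd ℂ) (z' t)) t := by
        simpa [Function.comp_def] using
          (Complex.conjCLE.hasFDerivAt.comp_hasDerivAt t (hz1 t ht))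
      have h1 : HasDerivAt (fun x => z' x * (starRingEnd ℂ) (z x))
          (z'' t * (starRingEnd ℂ) (z t) + z' t * (starRingEnd ℂ) (z' t)) t :=
        (hz2 t ht).mul hconj
      have h2 := Complex.imCLM.hasFDerivAt.comp_hasDerivAt t h1
      have h3 : Complex.imCLM (z'' t * (starRingEnd ℂ) (z t) + z' t * (starRingEnd ℂ) (z' t))
          = 0 := by
        simp [hz''0 t ht, Complex.mul_conj]
      rw [h3] at h2
      exact h2
    have hμconst : ∀ s ∈ I, ∀ t ∈ I, μ s = μ t :=
      constOn hIconv (f' := fun _ => (0:ℝ)) hμd (fun _ _ => rfl)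
    -- key identity for Im(v2 · conj z)
    have hv2im : ∀ t ∈ I, (v2 t * (starRingEnd ℂ) (z t)).im = 2 * r' t * μ t := by
      intro t ht
      have he : v2 t * (starRingEnd ℂ) (z t)
          = ((2 * r' t : ℝ) : ℂ) * (z' t * (starRingEnd ℂ) (z t))
            + ((r'' t : ℝ) : ℂ) * (z t * (starRingEnd ℂ) (z t)) := by
        simp only [hv2def]
        rw [hz''0 t ht]
        push_cast
        ring
      rw [he]
      simp [Complex.im_ofReal_mul, Complex.mul_conj, hμdef]
  -- v2 vanishes on I
    have hv2z : ∀ t ∈ I, v2 t = 0 := by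
      by_cases hμ0 : μ t₀ = 0
      · intro t ht
        have hμt : μ t = 0 := by rw [hμconst t ht t₀ ht₀]; exact hμ0
        have him : (v2 t * (starRingEnd ℂ) (z t)).im = 0 := by
          rw [hv2im t ht, hμt]; ring
        have hre : (v2 t * (starRingEnd ℂ) (z t)).re = 0 := hQf t ht
        have h3 : v2 t * (starRingEnd ℂ) (z t) = 0 := by
          apply Complex.ext <;> simp [hre, him]
        have h4 : (starRingEnd ℂ) (z t) ≠ 0 := by simpa using hz0 t ht
        exact (mul_eq_zero.mp h3).resolve_right h4
      · -- μ ≠ 0 everywhere: r is constant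
        have hμne : ∀ t ∈ I, μ t ≠ 0 := by
          intro t ht h
          exact hμ0 (by rw [hμconst t₀ ht₀ t ht]; exact h)
        have hrr' : ∀ t ∈ I, r t * r' t = 0 := by
          intro t ht
          have hYt := hY0 t ht
          simp only [hY] at hYt
          rw [re_conj_I_mul] at hYt
          have h2 : (v2 t * (starRingEnd ℂ) (v t)).im = r t * (v2 t * (starRingEnd ℂ) (z t)).im := by
            have he : v2 t * (starRingEnd ℂ) (v t)
                = ((r t : ℝ) : ℂ) * (v2 t * (starRingEnd ℂ) (z t)) := by
              simp only [hvdef]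
              rw [map_mul, Complex.conj_ofReal]
              ring
            rw [he, Complex.im_ofReal_mul]
          rw [h2, hv2im t ht] at hYt
          -- hYt : r t * (2 * r' t * μ t) = 0
          have h5 : (r t * r' t) * (2 * μ t) = 0 := by linear_combination hYt
          rcases mul_eq_zero.mp h5 with h | h
          · exact h
          · exact absurd (by linarith) (hμne t ht)
        have hsqd : ∀ t ∈ I, HasDerivAt (fun x => r x ^ 2) (2 * (r t * r' t)) t := by
          intro t ht
          have := (hr1 t ht).fun_pow 2
          simpa [mul_comm, mul_assoc, mul_left_comm] using this
        have hr2const : ∀ s ∈ I, ∀ t ∈ I, r s ^ 2 = r t ^ 2 :=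
          constOn hIconv (f' := fun t => 2 * (r t * r' t)) hsqd
            (fun t ht => by show 2 * (r t * r' t) = 0; rw [hrr' t ht]; ring)
        have hrconst : ∀ t ∈ I, r t = r t₀ := by
          intro t ht
          by_contra hne'
          have hsq : r t ^ 2 = r t₀ ^ 2 := hr2const t ht t₀ ht₀
          have hfac : (r t - r t₀) * (r t + r t₀) = 0 := by linear_combination hsq
          have h1 : r t = - r t₀ := by
            rcases mul_eq_zero.mp hfac with h | h
            · exact absurd (by linarith) hne'
            · linarith
          have hne0 : r t₀ ≠ 0 := by
            intro h
            exact hne' (by rw [h1, h]; ring)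
          have hsubI : Set.uIcc t t₀ ⊆ I :=
            (hIconv.ordConnected).uIcc_subset ht ht₀
          have hcont : ContinuousOn r (Set.uIcc t t₀) := fun x hx =>
            ((hr1 x (hsubI hx)).continuousAt).continuousWithinAt
          have h0mem : (0:ℝ) ∈ Set.uIcc (r t) (r t₀) := by
            rw [h1, Set.mem_uIcc]
            rcases le_total (r t₀) 0 with h | h
            · right; constructor <;> linarith
            · left; constructor <;> linarith
          obtain ⟨x, hx, hx0⟩ := intermediate_value_uIcc hcont h0mem
          have hx2 : r x ^ 2 = r t₀ ^ 2 := hr2const x (hsubI hx) t₀ ht₀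
          rw [hx0] at hx2
          exact hne0 (by nlinarith)
        have hr'0 : ∀ t ∈ I, r' t = 0 := by
          intro t ht
          have hev : r =ᶠ[nhds t] (fun _ => r t₀) := by
            filter_upwards [hIopen.mem_nhds ht] with x hx using hrconst x hx
          exact (hr1 t ht).unique
            ((hasDerivAt_const t (r t₀)).congr_of_eventuallyEq hev)
        have hr''0 : ∀ t ∈ I, r'' t = 0 := by
          intro t ht
          have hev : r' =ᶠ[nhds t] (fun _ => (0:ℝ)) := by
            filter_upwards [hIopen.mem_nhds ht] with x hx using hr'0 x hx
          exact (hr2 t ht).unique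
            ((hasDerivAt_const t (0:ℝ)).congr_of_eventuallyEq hev)
        intro t ht
        simp only [hv2def]
        rw [hz''0 t ht, hr'0 t ht, hr''0 t ht]
        push_cast
        ring
    -- v1 is constant
    have hv1const : ∀ s ∈ I, ∀ t ∈ I, v1 s = v1 t := constOn hIconv hv1d hv2z
    -- build the line and contradict hline
    exfalso
    apply hline
    refine ⟨![0, z t₀ - (t₀ : ℂ) * z' t₀, v t₀ - (t₀ : ℂ) * v1 t₀], ![0, z' t₀, v1 t₀], ?_⟩
    intro t ht
    rw [hβeq t ht]
    have hzl : z t - (t : ℂ) * z' t₀ = z t₀ - (t₀ : ℂ) * z' t₀ := by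
      have hd : ∀ x ∈ I, HasDerivAt (fun y => z y - (y : ℂ) * z' t₀) (z' x - z' t₀) x := by
        intro x hx
        have h1 : HasDerivAt (fun y : ℝ => (y : ℂ) * z' t₀) (z' t₀) x := by
          simpa using (Complex.ofRealCLM.hasDerivAt (x := x)).mul_const (z' t₀)
        exact (hz1 x hx).sub h1
      have h0 : ∀ x ∈ I, z' x - z' t₀ = 0 := by
        intro x hx; rw [hz'const x hx t₀ ht₀]; ring
      exact constOn hIconv hd h0 t ht t₀ ht₀
    have hvl : v t - (t : ℂ) * v1 t₀ = v t₀ - (t₀ : ℂ) * v1 t₀ := by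
      have hd : ∀ x ∈ I, HasDerivAt (fun y => v y - (y : ℂ) * v1 t₀) (v1 x - v1 t₀) x := by
        intro x hx
        have h1 : HasDerivAt (fun y : ℝ => (y : ℂ) * v1 t₀) (v1 t₀) x := by
          simpa using (Complex.ofRealCLM.hasDerivAt (x := x)).mul_const (v1 t₀)
        exact (hvd x hx).sub h1
      have h0 : ∀ x ∈ I, v1 x - v1 t₀ = 0 := by
        intro x hx; rw [hv1const x hx t₀ ht₀]; ring
      exact constOn hIconv hd h0 t ht t₀ ht₀
    funext j
    fin_cases j
    · show (0:ℂ) = 0 + (t:ℂ) * 0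
      ring
    · show z t = (z t₀ - (t₀:ℂ) * z' t₀) + (t:ℂ) * z' t₀
      linear_combination hzl
    · show v t = (v t₀ - (t₀:ℂ) * v1 t₀) + (t:ℂ) * v1 t₀
      linear_combination hvl
  · -- backward direction
    intro heq
    refine ⟨⟨L * c₀, fun t ht => ?_⟩, fun t ht => ?_, hg3⟩
    · rw [hg1 t ht, heq, ← hpq t ht]
      ring
    · rw [hg2 t ht, heq]
      linear_combination L * hXY t ht
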